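/- arXiv:2110.02195 — 2 statements merged into one kernel-verified Lean document; each statement's English description precedes it below -/
import Mathlib

section
/- For p ≥ 2 and l ≥ 2 integers, let (x_j)_{j∈[l]} be integers in [0, p], and let c₁, c₂, c₃ ∈ [0, p] be integers satisfying: (c₂ ≤ c₁ or c₃ = 0), c₁ + c₃ ≤ p, c₁ + c₂ + c₃ ≤ Σ_{j∈[l]} x_j, c₂ ≤ Σ_{j=2}^{l} x_j, and c₁ ≤ x₁. Then ∏_{j∈[l]} g(x_j) ≤ g(c₁ + c₃) · g(c₂). -/
/-!
Write `g p n = gNum p n / (2p²)`. For naturals with `s + t = u + v` and `u < s, t`,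
`gNum u · gNum v - gNum s · gNum t = (s - u)(t - u) · ((2p + 1)(s + t) - st - uv - 4p - 1)`,
and the last factor is nonnegative as soon as `v ≤ p`: spreading two arguments apart
increases `g(s) g(t)`, a discrete form of the log-convexity of `g`. With `u = 0` this makes
`g` supermultiplicative, so the factors `x_j`, `j ≠ 0`, merge into one argument `≥ c₂`;
then either `x₀ ≥ c₁ + c₃` and monotonicity finishes, or `c₂ ≤ c₁ < x₀`, and spreading the
pair `(x₀, ·)` apart to `(c₂, c₁ + c₃)` does.
-/

open Finset

noncomputable def g (p n : ℕ) : ℝ :=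
  1 - (n : ℝ) / p + (n : ℝ) * ((n : ℝ) - 1) / (2 * (p : ℝ) ^ 2)

theorem g_zero_right (p : ℕ) : g p 0 = 1 := by simp [g]

theorem g_zero_left (n : ℕ) : g 0 n = 1 := by simp [g]

def gNum (p n : ℕ) : ℝ := 2 * (p : ℝ) ^ 2 - 2 * p * n + n * ((n : ℝ) - 1)

theorem g_eq_div {p : ℕ} (hp : p ≠ 0) (n : ℕ) : g p n = gNum p n / (2 * (p : ℝ) ^ 2) := by
  unfold g gNum
  field_simp

theorem g_nonneg {p n : ℕ} (hn : n ≤ p) : 0 ≤ g p n := by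
  rcases eq_or_ne p 0 with rfl | hp
  · simp [g_zero_left]
  rw [g_eq_div hp, gNum]
  have hp1 : (1 : ℝ) ≤ p := by exact_mod_cast Nat.one_le_iff_ne_zero.2 hp
  have hnp : (n : ℝ) ≤ p := by exact_mod_cast hn
  apply div_nonneg _ (by positivity)
  nlinarith [sq_nonneg ((p : ℝ) - n)]

theorem g_antitoneOn (p : ℕ) : AntitoneOn (g p) (Set.Iic p) := by
  intro a _ b hb hab
  rcases eq_or_ne p 0 with rfl | hp
  · simp [g_zero_left]
  rw [g_eq_div hp, g_eq_div hp, gNum, gNum]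
  have hbp : (b : ℝ) ≤ p := by exact_mod_cast Set.mem_Iic.1 hb
  have hab' : (a : ℝ) ≤ b := by exact_mod_cast hab
  apply div_le_div_of_nonneg_right _ (by positivity)
  nlinarith [mul_nonneg (sub_nonneg.2 hab') (by linarith : (0 : ℝ) ≤ 2 * p - a - b + 1)]

theorem gNum_mul_gNum_le_of_lt {p u v s t : ℕ} (hv : v ≤ p) (hs : u < s) (ht : u < t)
    (hsum : s + t = u + v) : gNum p s * gNum p t ≤ gNum p u * gNum p v := by
  have hs' : (u : ℝ) + 1 ≤ s := by exact_mod_cast hs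
  have ht' : (u : ℝ) + 1 ≤ t := by exact_mod_cast ht
  have hsp : (s : ℝ) + 1 ≤ p := by exact_mod_cast (show s + 1 ≤ p by omega)
  have htp : (t : ℝ) + 1 ≤ p := by exact_mod_cast (show t + 1 ≤ p by omega)
  have hv' : (v : ℝ) = s + t - u := by
    rw [eq_sub_iff_add_eq]; exact_mod_cast (by omega : v + u = s + t)
  have hF : 0 ≤ (2 * (p : ℝ) + 1) * (s + t) - s * t - u * v - 4 * p - 1 := by
    rw [hv']
    nlinarith [
      mul_nonneg (by linarith : (0 : ℝ) ≤ s - 1 - u) (by linarith : (0 : ℝ) ≤ t - 1 - u),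
      mul_nonneg (by linarith : (0 : ℝ) ≤ p - s) (by linarith : (0 : ℝ) ≤ t - 1),
      mul_nonneg (by linarith : (0 : ℝ) ≤ p - t) (by linarith : (0 : ℝ) ≤ s - 1)]
  have key : gNum p u * gNum p v - gNum p s * gNum p t
      = (s - u) * (t - u) * ((2 * (p : ℝ) + 1) * (s + t) - s * t - u * v - 4 * p - 1) := by
    simp only [gNum]
    rw [hv']
    ring
  have hst : (0 : ℝ) ≤ (s - u) * (t - u) := mul_nonneg (by linarith) (by linarith)
  linarith [mul_nonneg hst hF]

theorem g_mul_g_le_g_mul_g {p u v s t : ℕ} (hv : v ≤ p) (hs : u ≤ s) (ht : u ≤ t)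
    (hsum : s + t = u + v) : g p s * g p t ≤ g p u * g p v := by
  rcases eq_or_lt_of_le hs with rfl | hs
  · obtain rfl : t = v := by omega
    rfl
  rcases eq_or_lt_of_le ht with rfl | ht
  · obtain rfl : s = v := by omega
    exact (mul_comm _ _).le
  rcases eq_or_ne p 0 with rfl | hp
  · simp [g_zero_left]
  simp only [g_eq_div hp, div_mul_div_comm]
  exact div_le_div_of_nonneg_right (gNum_mul_gNum_le_of_lt hv hs ht hsum) (by positivity)

theorem g_mul_g_le_g_add {p a b : ℕ} (hab : a + b ≤ p) : g p a * g p b ≤ g p (a + b) := by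
  simpa [g_zero_right] using
    g_mul_g_le_g_mul_g hab (Nat.zero_le a) (Nat.zero_le b) (zero_add _).symm

theorem g_mul_g_le_g_min {p a b : ℕ} (ha : a ≤ p) (hb : b ≤ p) :
    g p a * g p b ≤ g p (min (a + b) p) := by
  rcases le_total (a + b) p with h | h
  · rw [min_eq_left h]
    exact g_mul_g_le_g_add h
  rw [min_eq_right h]
  calc g p a * g p b ≤ g p (p - b) * g p b :=
        mul_le_mul_of_nonneg_right
          (g_antitoneOn p (Set.mem_Iic.2 (Nat.sub_le p b)) (Set.mem_Iic.2 ha) (by omega))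
          (g_nonneg hb)
    _ ≤ g p (p - b + b) := g_mul_g_le_g_add (by omega)
    _ = g p p := by rw [Nat.sub_add_cancel hb]

theorem prod_g_le_g_min_sum {ι : Type*} {p : ℕ} (s : Finset ι) (x : ι → ℕ)
    (hx : ∀ j ∈ s, x j ≤ p) : ∏ j ∈ s, g p (x j) ≤ g p (min (∑ j ∈ s, x j) p) := by
  induction s using Finset.cons_induction with
  | empty => simp [g_zero_right]
  | cons a s has ih =>
    rw [prod_cons, sum_cons]
    have hxa : x a ≤ p := hx a (mem_cons_self a s)
    calc g p (x a) * ∏ j ∈ s, g p (x j)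
        ≤ g p (x a) * g p (min (∑ j ∈ s, x j) p) :=
          mul_le_mul_of_nonneg_left (ih fun j hj => hx j (mem_cons_of_mem hj)) (g_nonneg hxa)
      _ ≤ g p (min (x a + min (∑ j ∈ s, x j) p) p) := g_mul_g_le_g_min hxa (min_le_right _ _)
      _ ≤ g p (min (x a + ∑ j ∈ s, x j) p) :=
          g_antitoneOn p (Set.mem_Iic.2 (min_le_right _ _)) (Set.mem_Iic.2 (min_le_right _ _))
            (by omega)

theorem g_mul_g_le_of_le {p a b c₁ c₂ c₃ : ℕ} (ha : a ≤ p) (hb : b ≤ p)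
    (h1 : c₂ ≤ c₁ ∨ c₃ = 0) (h2 : c₁ + c₃ ≤ p) (h3 : c₁ + c₂ + c₃ ≤ a + b)
    (h4 : c₂ ≤ b) (h5 : c₁ ≤ a) : g p a * g p b ≤ g p (c₁ + c₃) * g p c₂ := by
  have hanti := g_antitoneOn p
  rcases le_or_gt (c₁ + c₃) a with hca | hca
  · exact mul_le_mul (hanti h2 ha hca) (hanti (by omega : c₂ ≤ p) hb h4) (g_nonneg hb)
      (g_nonneg h2)
  have hc₂ : c₂ ≤ c₁ := by omega
  calc g p a * g p b ≤ g p a * g p (c₁ + c₂ + c₃ - a) :=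
        mul_le_mul_of_nonneg_left (hanti (by omega : c₁ + c₂ + c₃ - a ≤ p) hb (by omega))
          (g_nonneg ha)
    _ ≤ g p c₂ * g p (c₁ + c₃) := g_mul_g_le_g_mul_g h2 (by omega) (by omega) (by omega)
    _ = g p (c₁ + c₃) * g p c₂ := mul_comm _ _

theorem prod_g_le_of_mem {ι : Type*} [DecidableEq ι] {p c₁ c₂ c₃ : ℕ} (s : Finset ι) {i : ι}
    (hi : i ∈ s) (x : ι → ℕ) (hx : ∀ j ∈ s, x j ≤ p) (hc₂ : c₂ ≤ p)
    (h1 : c₂ ≤ c₁ ∨ c₃ = 0) (h2 : c₁ + c₃ ≤ p) (h3 : c₁ + c₂ + c₃ ≤ ∑ j ∈ s, x j)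
    (h4 : c₂ ≤ ∑ j ∈ s.erase i, x j) (h5 : c₁ ≤ x i) :
    ∏ j ∈ s, g p (x j) ≤ g p (c₁ + c₃) * g p c₂ := by
  rw [← mul_prod_erase s _ hi]
  rw [← add_sum_erase s _ hi] at h3
  calc g p (x i) * ∏ j ∈ s.erase i, g p (x j)
      ≤ g p (x i) * g p (min (∑ j ∈ s.erase i, x j) p) :=
        mul_le_mul_of_nonneg_left
          (prod_g_le_g_min_sum _ x fun j hj => hx j (mem_of_mem_erase hj)) (g_nonneg (hx i hi))
    _ ≤ g p (c₁ + c₃) * g p c₂ :=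
        g_mul_g_le_of_le (hx i hi) (min_le_right _ _) h1 h2 (by omega) (le_min h4 hc₂) h5

/-- Product optimization lemma for `g(x) = 1 - x/p + x(x-1)/(2p²)`:
under the stated integer constraints,
`∏_{j∈[l]} g(x_j) ≤ g(c₁ + c₃) · g(c₂)`. -/
theorem prod_g_le (p l : ℕ) (hl : 2 ≤ l)
    (x : Fin l → ℕ) (hx : ∀ j, x j ≤ p)
    (c₁ c₂ c₃ : ℕ) (hc₂ : c₂ ≤ p)
    (h1 : c₂ ≤ c₁ ∨ c₃ = 0)
    (h2 : c₁ + c₃ ≤ p)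
    (h3 : c₁ + c₂ + c₃ ≤ ∑ j, x j)
    (h4 : c₂ ≤ ∑ j ∈ Finset.univ.filter (fun j : Fin l => (j : ℕ) ≠ 0), x j)
    (h5 : c₁ ≤ x ⟨0, by omega⟩) :
    (∏ j, (1 - (x j : ℝ) / p + (x j : ℝ) * ((x j : ℝ) - 1) / (2 * (p : ℝ) ^ 2)))
      ≤ (1 - ((c₁ + c₃ : ℕ) : ℝ) / p
            + ((c₁ + c₃ : ℕ) : ℝ) * (((c₁ + c₃ : ℕ) : ℝ) - 1) / (2 * (p : ℝ) ^ 2))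
        * (1 - (c₂ : ℝ) / p + (c₂ : ℝ) * ((c₂ : ℝ) - 1) / (2 * (p : ℝ) ^ 2)) := by
  have herase : univ.filter (fun j : Fin l => (j : ℕ) ≠ 0) = univ.erase ⟨0, by omega⟩ := by
    ext j
    simp [Fin.ext_iff]
  rw [herase] at h4
  exact prod_g_le_of_mem univ (mem_univ _) x (fun j _ => hx j) hc₂ h1 h2 h3 h4 h5
end

section
/- Suppose x₁ ≥ c₁ ≥ 0, y ≥ c₂ ≥ 0, x₁ + y ≥ c₁ + c₂ + c₃, all lying in [0, p], with either c₃ = 0 or c₂ ≤ c₁, and c₁ + c₃ ≤ p. If u : [0,p] → ℝ is decreasing and convex, then u(x₁) + u(y) ≤ u(c₁ + c₃) + u(c₂). -/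
/-!
Write `a = c₁ + c₃` and `b = c₂`. If `x₁ ≥ a`, monotonicity alone gives `u x₁ ≤ u a` and
`u y ≤ u b`. Otherwise `c₃ ≠ 0`, so `b ≤ c₁ ≤ x₁ < a`; then `y ≥ a + b - x₁`, and
convexity spreads the pair `(x₁, a + b - x₁)`, which has the same sum as `(a, b)`, out to
the endpoints: `u x₁ + u (a + b - x₁) ≤ u a + u b`.
-/

section LinearOrderedField

variable {𝕜 : Type*} [Field 𝕜] [LinearOrder 𝕜] [IsStrictOrderedRing 𝕜] {s : Set 𝕜} {f : 𝕜 → 𝕜}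

theorem ConvexOn.map_add_map_add_sub_le (hf : ConvexOn 𝕜 s f)
    {a b x : 𝕜} (ha : a ∈ s) (hb : b ∈ s) (hbx : b ≤ x) (hxa : x ≤ a) :
    f x + f (a + b - x) ≤ f a + f b := by
  rcases hbx.eq_or_lt with rfl | hbx'
  · simp [add_comm]
  have hab : 0 < a - b := by linarith
  set t := (a - x) / (a - b)
  have ht₀ : 0 ≤ t := div_nonneg (by linarith) hab.le
  have ht₁ : 0 ≤ 1 - t := by
    rw [sub_nonneg, div_le_one hab]
    linarith
  have hx : t • b + (1 - t) • a = x := by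
    simp only [t, smul_eq_mul]
    field_simp
    ring
  have hx' : (1 - t) • b + t • a = a + b - x := by
    simp only [t, smul_eq_mul]
    field_simp
    ring
  have h₁ := hf.2 hb ha ht₀ ht₁ (by ring)
  have h₂ := hf.2 hb ha ht₁ ht₀ (by ring)
  rw [hx] at h₁
  rw [hx'] at h₂
  simp only [smul_eq_mul] at h₁ h₂
  linarith

theorem ConvexOn.map_add_map_le_of_antitoneOn (hf : ConvexOn 𝕜 s f)
    (hf' : AntitoneOn f s) {a b x y : 𝕜} (ha : a ∈ s) (hb : b ∈ s) (hx : x ∈ s) (hy : y ∈ s)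
    (hbx : b ≤ x) (hby : b ≤ y) (hsum : a + b ≤ x + y) :
    f x + f y ≤ f a + f b := by
  rcases le_or_gt a x with hax | hxa
  · exact add_le_add (hf' ha hx hax) (hf' hb hy hby)
  have hz : a + b - x ∈ s := hf.1.ordConnected.out hb ha ⟨by linarith, by linarith⟩
  calc f x + f y ≤ f x + f (a + b - x) := by gcongr; exact hf' hz hy (by linarith)
    _ ≤ f a + f b := hf.map_add_map_add_sub_le ha hb hbx hxa.le

end LinearOrderedField

theorem two_var_opt_general (p : ℝ)
    (x₁ y c₁ c₂ c₃ : ℕ)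
    (hx₁p : (x₁ : ℝ) ≤ p) (hyp : (y : ℝ) ≤ p)
    (hc₂p : (c₂ : ℝ) ≤ p)
    (hx₁ : c₁ ≤ x₁) (hy : c₂ ≤ y)
    (hsum : c₁ + c₂ + c₃ ≤ x₁ + y)
    (hcase : c₃ = 0 ∨ c₂ ≤ c₁)
    (hc₁₃ : ((c₁ : ℝ) + c₃) ≤ p)
    (u : ℝ → ℝ)
    (hanti : AntitoneOn u (Set.Icc (0 : ℝ) p))
    (hconv : ConvexOn ℝ (Set.Icc (0 : ℝ) p) u) :
    u x₁ + u y ≤ u ((c₁ : ℝ) + c₃) + u c₂ := by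
  have hx : (x₁ : ℝ) ∈ Set.Icc 0 p := ⟨x₁.cast_nonneg, hx₁p⟩
  have hy' : (y : ℝ) ∈ Set.Icc 0 p := ⟨y.cast_nonneg, hyp⟩
  have hb : (c₂ : ℝ) ∈ Set.Icc 0 p := ⟨c₂.cast_nonneg, hc₂p⟩
  have ha : (c₁ : ℝ) + c₃ ∈ Set.Icc 0 p := ⟨by positivity, hc₁₃⟩
  rcases hcase with rfl | hc₂₁
  · simp only [Nat.cast_zero, add_zero] at ha ⊢
    exact add_le_add (hanti ha hx (mod_cast hx₁)) (hanti hb hy' (mod_cast hy))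
  · exact hconv.map_add_map_le_of_antitoneOn hanti ha hb hx hy'
      (mod_cast hc₂₁.trans hx₁) (mod_cast hy) (mod_cast (by omega : c₁ + c₃ + c₂ ≤ x₁ + y))

/-- Two-variable core of the product optimization lemma: for integers
`x₁ ≥ c₁ ≥ 0`, `y ≥ c₂ ≥ 0` in `[0,p]` with `x₁ + y ≥ c₁ + c₂ + c₃`,
`(c₃ = 0 or c₂ ≤ c₁)`, `c₁ + c₃ ≤ p`, and `u` decreasing and convex on `[0,p]`,
we have `u(x₁) + u(y) ≤ u(c₁+c₃) + u(c₂)`. -/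
theorem two_var_opt (p : ℝ) (hp : 2 ≤ p)
    (x₁ y c₁ c₂ c₃ : ℕ)
    (hx₁p : (x₁ : ℝ) ≤ p) (hyp : (y : ℝ) ≤ p)
    (hc₁p : (c₁ : ℝ) ≤ p) (hc₂p : (c₂ : ℝ) ≤ p) (hc₃p : (c₃ : ℝ) ≤ p)
    (hx₁ : c₁ ≤ x₁) (hy : c₂ ≤ y)
    (hsum : c₁ + c₂ + c₃ ≤ x₁ + y)
    (hcase : c₃ = 0 ∨ c₂ ≤ c₁)
    (hc₁₃ : ((c₁ : ℝ) + c₃) ≤ p)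
    (u : ℝ → ℝ)
    (hanti : AntitoneOn u (Set.Icc (0 : ℝ) p))
    (hconv : ConvexOn ℝ (Set.Icc (0 : ℝ) p) u) :
    u x₁ + u y ≤ u ((c₁ : ℝ) + c₃) + u c₂ :=
  two_var_opt_general p x₁ y c₁ c₂ c₃ hx₁p hyp hc₂p hx₁ hy hsum hcase hc₁₃ u hanti hconv
end
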